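/- For every d∈(0,1] and positive integer k there exist ρ,ζ>0 and n₀ such that every (ρ,d)-dense graph G on n≥n₀ vertices contains a k-path P on at least ζn vertices in which every k consecutive vertices form a ζ-connectable clique K_k. -/

import Mathlib

open Finset
open scoped Classical

variable {V : Type*} [Fintype V] [DecidableEq V]

/-- Number of ordered pairs `(x,y) ∈ X × Y` with `x` adjacent to `y`.
For disjoint `X`, `Y` this is the number `e(X,Y)` of edges between `X` and `Y`. -/
noncomputable def crossCount (G : SimpleGraph V) (X Y : Finset V) : ℕ :=
  ((X ×ˢ Y).filter fun p => G.Adj p.1 p.2).card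

/-- Number of ordered adjacent pairs inside `U`; `edgePairs G U / 2 = e(U)`. -/
noncomputable def edgePairs (G : SimpleGraph V) (U : Finset V) : ℕ :=
  ((U ×ˢ U).filter fun p => G.Adj p.1 p.2).card

/-- `G` is `(ρ,d)`-dense: `e(U) ≥ d|U|²/2 - ρ n²` for every `U`. -/
def RhoDense (G : SimpleGraph V) (ρ d : ℝ) : Prop :=
  ∀ U : Finset V,
    (edgePairs G U : ℝ) / 2 ≥ d * (U.card : ℝ) ^ 2 / 2 - ρ * (Fintype.card V : ℝ) ^ 2

/-- `G` is `μ`-inseparable: `e(X, V∖X) ≥ μ|X||V∖X|` for every `X`. -/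
def MuInsep (G : SimpleGraph V) (μ : ℝ) : Prop :=
  ∀ X : Finset V, (crossCount G X Xᶜ : ℝ) ≥ μ * (X.card : ℝ) * (Xᶜ.card : ℝ)

/-- Number of common neighbours of the vertices of the tuple `x`. -/
noncomputable def extCount (G : SimpleGraph V) {k : ℕ} (x : Fin k → V) : ℕ :=
  (Finset.univ.filter fun w => ∀ i, G.Adj (x i) w).card

/-- A `k`-tuple is `ζ`-connectable if it extends to at least `ζn` cliques `K_{k+1}`. -/
def Connectable (G : SimpleGraph V) (ζ : ℝ) {k : ℕ} (x : Fin k → V) : Prop :=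
  (extCount G x : ℝ) ≥ ζ * (Fintype.card V : ℝ)

/-- `v` is a `k`-path (the `k`-th power of a path) in `G`. -/
def IsPowPath (G : SimpleGraph V) (k : ℕ) {ℓ : ℕ} (v : Fin ℓ → V) : Prop :=
  Function.Injective v ∧
    ∀ i j : Fin ℓ, (i : ℕ) < (j : ℕ) → (j : ℕ) ≤ (i : ℕ) + k → G.Adj (v i) (v j)

/-- Number of `(x,y)`-walks with exactly `ℓ` inner vertices. -/
noncomputable def walkCount (G : SimpleGraph V) (x y : V) (ℓ : ℕ) : ℕ :=
  (Finset.univ.filter fun v : Fin ℓ → V =>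
    ∀ i : Fin (ℓ + 1),
      G.Adj ((Fin.cons x (Fin.snoc v y) : Fin (ℓ + 2) → V) i.castSucc)
        ((Fin.cons x (Fin.snoc v y) : Fin (ℓ + 2) → V) i.succ)).card

/-- Number of `(x⃗,y⃗;k)`-paths with exactly `m` inner vertices. -/
noncomputable def pathCount (G : SimpleGraph V) (k : ℕ) (x y : Fin k → V) (m : ℕ) : ℕ :=
  (Finset.univ.filter fun w : Fin m → V =>
    IsPowPath G k (Fin.append (Fin.append x w) y)).card

/-- `G` contains the `k`-th power of a Hamiltonian cycle. -/
def HasHamCyclePower {n : ℕ} (G : SimpleGraph (Fin n)) (k : ℕ) : Prop :=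
  ∃ σ : Equiv.Perm (Fin n), ∀ (i : Fin n) (s : ℕ), 0 < s → s ≤ k →
    G.Adj (σ i) (σ ⟨((i : ℕ) + s) % n, Nat.mod_lt _ i.pos⟩)

set_option linter.unusedSectionVars false

lemma edgePairs_eq_sum (G : SimpleGraph V) (C : Finset V) :
    edgePairs G C = ∑ v ∈ C, (C.filter fun w => G.Adj v w).card := by
  unfold edgePairs
  rw [Finset.card_filter, Finset.sum_product]
  exact Finset.sum_congr rfl fun v _ => (Finset.card_filter _ _).symm

lemma deg_many (G : SimpleGraph V) {d ρ γ : ℝ} (hd0 : 0 < d) (hγ : 0 < γ)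
    (hρ : ρ ≤ d * γ ^ 2 / 8) (hdense : RhoDense G ρ d) (hN : 1 ≤ Fintype.card V)
    (C : Finset V) (hC : γ * (Fintype.card V : ℝ) ≤ (C.card : ℝ)) :
    (d / 4) * (C.card : ℝ) ≤
      (((C.filter fun v => (d / 2) * (C.card : ℝ) ≤ ((C.filter fun w => G.Adj v w).card : ℝ)).card : ℝ)) := by
  have hN0 : (1:ℝ) ≤ (Fintype.card V : ℝ) := by exact_mod_cast hN
  have hCpos : (0:ℝ) < (C.card : ℝ) := lt_of_lt_of_le (by positivity) hC
  have hdense' := hdense C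
  have h1 : d * (C.card : ℝ) ^ 2 - 2 * ρ * (Fintype.card V : ℝ) ^ 2 ≤ (edgePairs G C : ℝ) := by
    rw [ge_iff_le, le_div_iff₀ (by norm_num : (0:ℝ) < 2)] at hdense'
    nlinarith [hdense']
  have h2 : (edgePairs G C : ℝ) = ∑ v ∈ C, ((C.filter fun w => G.Adj v w).card : ℝ) := by
    rw [edgePairs_eq_sum]; push_cast; ring
  set H := C.filter fun v => (d / 2) * (C.card : ℝ) ≤ ((C.filter fun w => G.Adj v w).card : ℝ) with hH
  have hdC : (0:ℝ) ≤ (d/2) * (C.card : ℝ) := by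
    have := hCpos.le; nlinarith
  have h3 : ∑ v ∈ C, ((C.filter fun w => G.Adj v w).card : ℝ)
      ≤ (H.card : ℝ) * (C.card : ℝ) + (C.card : ℝ) * ((d / 2) * (C.card : ℝ)) := by
    rw [← Finset.sum_filter_add_sum_filter_not C (fun v => (d / 2) * (C.card : ℝ) ≤ ((C.filter fun w => G.Adj v w).card : ℝ))]
    have hA : ∑ v ∈ H, ((C.filter fun w => G.Adj v w).card : ℝ) ≤ (H.card : ℝ) * (C.card : ℝ) := by
      calc ∑ v ∈ H, ((C.filter fun w => G.Adj v w).card : ℝ)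
          ≤ ∑ _v ∈ H, (C.card : ℝ) := by
            apply Finset.sum_le_sum
            intro v _
            exact_mod_cast Finset.card_filter_le C _
        _ = (H.card : ℝ) * (C.card : ℝ) := by rw [Finset.sum_const, nsmul_eq_mul]
    have hB : ∑ v ∈ C.filter (fun v => ¬ ((d / 2) * (C.card : ℝ) ≤ ((C.filter fun w => G.Adj v w).card : ℝ))), ((C.filter fun w => G.Adj v w).card : ℝ)
        ≤ (C.card : ℝ) * ((d / 2) * (C.card : ℝ)) := by
      have hcard : ((C.filter (fun v => ¬ ((d / 2) * (C.card : ℝ) ≤ ((C.filter fun w => G.Adj v w).card : ℝ)))).card : ℝ) ≤ (C.card : ℝ) := by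
        exact_mod_cast Finset.card_filter_le C _
      calc ∑ v ∈ C.filter (fun v => ¬ ((d / 2) * (C.card : ℝ) ≤ ((C.filter fun w => G.Adj v w).card : ℝ))), ((C.filter fun w => G.Adj v w).card : ℝ)
          ≤ ∑ _v ∈ C.filter (fun v => ¬ ((d / 2) * (C.card : ℝ) ≤ ((C.filter fun w => G.Adj v w).card : ℝ))), (d / 2) * (C.card : ℝ) := by
            apply Finset.sum_le_sum
            intro v hv
            exact le_of_lt (lt_of_not_ge (Finset.mem_filter.mp hv).2)
        _ = ((C.filter (fun v => ¬ ((d / 2) * (C.card : ℝ) ≤ ((C.filter fun w => G.Adj v w).card : ℝ)))).card : ℝ) * ((d/2) * (C.card : ℝ)) := by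
            rw [Finset.sum_const, nsmul_eq_mul]
        _ ≤ (C.card : ℝ) * ((d / 2) * (C.card : ℝ)) := mul_le_mul_of_nonneg_right hcard hdC
    linarith
  have hγN : (0:ℝ) ≤ γ * (Fintype.card V : ℝ) := by positivity
  have hsq : (γ * (Fintype.card V : ℝ))^2 ≤ (C.card : ℝ)^2 := by nlinarith
  have h4 : 2 * ρ * (Fintype.card V : ℝ) ^ 2 ≤ (d / 4) * (C.card : ℝ) ^ 2 := by
    nlinarith [mul_nonneg (by linarith : (0:ℝ) ≤ d * γ ^ 2 / 8 - ρ) (sq_nonneg ((Fintype.card V : ℝ))),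
      mul_le_mul_of_nonneg_left hsq (by linarith : (0:ℝ) ≤ d/4)]
  have h5 : (d/4) * (C.card : ℝ)^2 ≤ (H.card : ℝ) * (C.card : ℝ) := by
    rw [h2] at h1
    linarith
  nlinarith [h5, hCpos]


noncomputable def tupSet (G : SimpleGraph V) (d : ℝ) (j : ℕ) : Finset (Fin j → V) :=
  Finset.univ.filter fun x => (∀ a b, a ≠ b → G.Adj (x a) (x b)) ∧
    (d / 2) ^ j * (Fintype.card V : ℝ) ≤ ((Finset.univ.filter fun w => ∀ a, G.Adj (x a) w).card : ℝ)

lemma tupSet_zero (G : SimpleGraph V) (d : ℝ) : (tupSet G d 0).card = 1 := by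
  have h : tupSet G d 0 = Finset.univ := by
    apply Finset.filter_true_of_mem
    intro x _
    constructor
    · intro a; exact a.elim0
    · rw [pow_zero, one_mul]
      have h2 : (Finset.univ.filter fun w : V => ∀ a : Fin 0, G.Adj (x a) w) = Finset.univ := by
        apply Finset.filter_true_of_mem; intro w _; intro a; exact a.elim0
      rw [h2, Finset.card_univ]
  rw [h, Finset.card_univ, Fintype.card_fun]
  simp

lemma common_snoc (G : SimpleGraph V) {j : ℕ} (x : Fin j → V) (v : V) :
    (Finset.univ.filter fun w => ∀ a : Fin (j+1), G.Adj ((Fin.snoc x v : Fin (j+1) → V) a) w) =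
      ((Finset.univ.filter fun w => ∀ a, G.Adj (x a) w).filter fun w => G.Adj v w) := by
  ext w
  simp only [Finset.mem_filter, Finset.mem_univ, true_and]
  constructor
  · intro h
    refine ⟨fun a => ?_, ?_⟩
    · have := h a.castSucc; rwa [Fin.snoc_castSucc] at this
    · have := h (Fin.last j); rwa [Fin.snoc_last] at this
  · rintro ⟨h1, h2⟩ a
    rcases Fin.eq_castSucc_or_eq_last a with ⟨i, rfl⟩ | rfl
    · rw [Fin.snoc_castSucc]; exact h1 i
    · rwa [Fin.snoc_last]

lemma snoc_pairwise (G : SimpleGraph V) {j : ℕ} {x : Fin j → V} {v : V}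
    (hadj : ∀ a b, a ≠ b → G.Adj (x a) (x b)) (hv : ∀ a, G.Adj (x a) v) :
    ∀ a b : Fin (j+1), a ≠ b → G.Adj ((Fin.snoc x v : Fin (j+1) → V) a) ((Fin.snoc x v : Fin (j+1) → V) b) := by
  intro a b hab
  rcases Fin.eq_castSucc_or_eq_last a with ⟨i, rfl⟩ | rfl <;>
    rcases Fin.eq_castSucc_or_eq_last b with ⟨i', rfl⟩ | rfl
  · rw [Fin.snoc_castSucc, Fin.snoc_castSucc]
    refine hadj i i' fun h => hab (by rw [h])
  · rw [Fin.snoc_castSucc, Fin.snoc_last]; exact hv i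
  · rw [Fin.snoc_castSucc, Fin.snoc_last]; exact (hv i').symm
  · exact absurd rfl hab

lemma tupSet_step (G : SimpleGraph V) {d ρ : ℝ} (hd0 : 0 < d) (hd1 : d ≤ 1) {k : ℕ}
    (hρ : ρ ≤ d * ((d / 2) ^ (2 * k)) ^ 2 / 8) (hdense : RhoDense G ρ d)
    (hN : 1 ≤ Fintype.card V) {j : ℕ} (hj : j ≤ 2 * k) :
    ((d / 4) * (d / 2) ^ (2 * k) * (Fintype.card V : ℝ)) * ((tupSet G d j).card : ℝ)
      ≤ ((tupSet G d (j + 1)).card : ℝ) := by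
  classical
  have hd2 : (0:ℝ) ≤ d / 2 := by linarith
  have hd21 : d / 2 ≤ 1 := by linarith
  have hγ : (0:ℝ) < (d / 2) ^ (2 * k) := by positivity
  set Cx : (Fin j → V) → Finset V := fun x => Finset.univ.filter fun w => ∀ a, G.Adj (x a) w with hCx
  set Ex : (Fin j → V) → Finset V := fun x =>
    (Cx x).filter fun v => (d / 2) * ((Cx x).card : ℝ) ≤ (((Cx x).filter fun w => G.Adj v w).card : ℝ) with hEx
  have hkey : ∀ x ∈ tupSet G d j,
      ((d / 4) * (d / 2) ^ (2 * k) * (Fintype.card V : ℝ)) ≤ ((Ex x).card : ℝ) := by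
    intro x hx
    obtain ⟨-, -, hcom⟩ := Finset.mem_filter.mp hx
    have hmono : ((d:ℝ) / 2) ^ (2 * k) ≤ (d / 2) ^ j := pow_le_pow_of_le_one hd2 hd21 hj
    have hCxc : (d / 2) ^ (2*k) * (Fintype.card V : ℝ) ≤ ((Cx x).card : ℝ) := by
      refine le_trans ?_ hcom
      have hc0 : (0:ℝ) ≤ (Fintype.card V : ℝ) := by positivity
      nlinarith
    have h := deg_many G hd0 hγ hρ hdense hN (Cx x) hCxc
    refine le_trans ?_ h
    have h1 : (d/4) * ((d/2)^(2*k) * (Fintype.card V : ℝ)) ≤ (d/4) * ((Cx x).card : ℝ) :=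
      mul_le_mul_of_nonneg_left hCxc (by linarith)
    linarith [h1]
  set T : Finset (Fin (j+1) → V) := (tupSet G d j).biUnion (fun x => (Ex x).image (Fin.snoc x)) with hT
  have hsub : T ⊆ tupSet G d (j + 1) := by
    intro y hy
    obtain ⟨x, hx, hy2⟩ := Finset.mem_biUnion.mp hy
    obtain ⟨v, hv, rfl⟩ := Finset.mem_image.mp hy2
    obtain ⟨-, hadj, hcom⟩ := Finset.mem_filter.mp hx
    obtain ⟨hvC, hvdeg⟩ := Finset.mem_filter.mp hv
    have hvC' : ∀ a, G.Adj (x a) v := by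
      have := (Finset.mem_filter.mp hvC).2; exact this
    refine Finset.mem_filter.mpr ⟨Finset.mem_univ _, snoc_pairwise G hadj hvC', ?_⟩
    rw [common_snoc]
    have heq : (d/2)^(j+1) * (Fintype.card V : ℝ) = (d/2) * ((d/2)^j * (Fintype.card V : ℝ)) := by ring
    rw [heq]
    refine le_trans ?_ hvdeg
    exact mul_le_mul_of_nonneg_left hcom hd2
  have hdisj : ∀ x ∈ tupSet G d j, ∀ x' ∈ tupSet G d j, x ≠ x' →
      Disjoint ((Ex x).image (Fin.snoc (α := fun _ => V) x)) ((Ex x').image (Fin.snoc (α := fun _ => V) x')) := by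
    intro x _ x' _ hne
    rw [Finset.disjoint_left]
    intro y hy hy'
    obtain ⟨v, _, rfl⟩ := Finset.mem_image.mp hy
    obtain ⟨v', _, he⟩ := Finset.mem_image.mp hy'
    apply hne
    funext a
    have h2 := congrFun he a.castSucc
    rw [Fin.snoc_castSucc, Fin.snoc_castSucc] at h2
    exact h2.symm
  have hcardT : (T.card : ℝ) = ∑ x ∈ tupSet G d j, (((Ex x).image (Fin.snoc (α := fun _ => V) x)).card : ℝ) := by
    rw [hT, Finset.card_biUnion hdisj]
    push_cast; ring
  have himg : ∀ x : Fin j → V, ((Ex x).image (Fin.snoc (α := fun _ => V) x)).card = (Ex x).card := by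
    intro x
    apply Finset.card_image_of_injective
    intro v v' he
    have := congrFun he (Fin.last j)
    rwa [Fin.snoc_last, Fin.snoc_last] at this
  have hsum : ((tupSet G d j).card : ℝ) * ((d / 4) * (d / 2) ^ (2 * k) * (Fintype.card V : ℝ))
      ≤ (T.card : ℝ) := by
    rw [hcardT]
    have := Finset.card_nsmul_le_sum (tupSet G d j)
      (fun x => (((Ex x).image (Fin.snoc (α := fun _ => V) x)).card : ℝ))
      ((d / 4) * (d / 2) ^ (2 * k) * (Fintype.card V : ℝ))
      (fun x hx => by rw [himg x]; exact hkey x hx)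
    rwa [nsmul_eq_mul] at this
  have hle : (T.card : ℝ) ≤ ((tupSet G d (j+1)).card : ℝ) := by
    exact_mod_cast Finset.card_le_card hsub
  linarith [hsum, hle]

lemma tupSet_card (G : SimpleGraph V) {d ρ : ℝ} (hd0 : 0 < d) (hd1 : d ≤ 1) {k : ℕ}
    (hρ : ρ ≤ d * ((d / 2) ^ (2 * k)) ^ 2 / 8) (hdense : RhoDense G ρ d)
    (hN : 1 ≤ Fintype.card V) :
    ∀ j, j ≤ 2 * k →
      (((d / 4) * (d / 2) ^ (2 * k) * (Fintype.card V : ℝ)) ^ j : ℝ) ≤ ((tupSet G d j).card : ℝ) := by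
  intro j
  induction j with
  | zero => intro _; rw [tupSet_zero, pow_zero]; norm_num
  | succ j ih =>
    intro hj
    have hj' : j ≤ 2 * k := by omega
    have h1 := tupSet_step G hd0 hd1 hρ hdense hN hj'
    have h2 := ih hj'
    have hc : (0:ℝ) ≤ (d / 4) * (d / 2) ^ (2 * k) * (Fintype.card V : ℝ) := by positivity
    calc ((d / 4) * (d / 2) ^ (2 * k) * (Fintype.card V : ℝ)) ^ (j+1)
        = ((d / 4) * (d / 2) ^ (2 * k) * (Fintype.card V : ℝ)) * ((d / 4) * (d / 2) ^ (2 * k) * (Fintype.card V : ℝ)) ^ j := by ring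
      _ ≤ ((d / 4) * (d / 2) ^ (2 * k) * (Fintype.card V : ℝ)) * ((tupSet G d j).card : ℝ) :=
          mul_le_mul_of_nonneg_left h2 hc
      _ ≤ ((tupSet G d (j+1)).card : ℝ) := h1


noncomputable def RelPc (G : SimpleGraph V) (k : ℕ) (Q Q' : Fin k → V) : Finset V :=
  Finset.univ.filter fun w => (∀ a, G.Adj (Q a) w) ∧ (∀ a, G.Adj (Q' a) w)

def XRel (G : SimpleGraph V) (d : ℝ) (k : ℕ) (Q Q' : Fin k → V) : Prop :=
  (∀ a b, a ≠ b → G.Adj (Q a) (Q b)) ∧ (∀ a b, a ≠ b → G.Adj (Q' a) (Q' b)) ∧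
  (∀ a b, G.Adj (Q a) (Q' b)) ∧
  ((d / 2) ^ (2 * k) * (Fintype.card V : ℝ) ≤ ((RelPc G k Q Q').card : ℝ))

lemma RelPc_comm (G : SimpleGraph V) (k : ℕ) (Q Q' : Fin k → V) :
    RelPc G k Q' Q = RelPc G k Q Q' := by
  unfold RelPc; ext w; simp only [Finset.mem_filter]; tauto

lemma XRel_symm (G : SimpleGraph V) (d : ℝ) (k : ℕ) {Q Q' : Fin k → V}
    (h : XRel G d k Q Q') : XRel G d k Q' Q := by
  obtain ⟨h1, h2, h3, h4⟩ := h
  exact ⟨h2, h1, fun a b => (h3 b a).symm, by rwa [RelPc_comm]⟩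

lemma pairs_lower (G : SimpleGraph V) (d : ℝ) (k : ℕ) (hk : 1 ≤ k) :
    ((tupSet G d (2 * k)).card : ℝ) ≤
      ((((Finset.univ ×ˢ Finset.univ : Finset ((Fin k → V) × (Fin k → V))).filter
        fun p => XRel G d k p.1 p.2).card : ℝ)) := by
  have h : (tupSet G d (2 * k)).card ≤
      ((Finset.univ ×ˢ Finset.univ : Finset ((Fin k → V) × (Fin k → V))).filter
        fun p => XRel G d k p.1 p.2).card := by
    apply Finset.card_le_card_of_injOn
      (fun x => ((fun a : Fin k => x ⟨a.1, by omega⟩), (fun a : Fin k => x ⟨k + a.1, by omega⟩)))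
    · intro x hx
      obtain ⟨-, hadj, hcom⟩ := Finset.mem_filter.mp hx
      refine Finset.mem_filter.mpr ⟨by simp, ?_, ?_, ?_, ?_⟩
      · intro a b hab
        refine hadj _ _ (fun h => hab ?_)
        have : a.1 = b.1 := by
          have := congrArg Fin.val h; simpa using this
        exact Fin.ext this
      · intro a b hab
        refine hadj _ _ (fun h => hab ?_)
        have : k + a.1 = k + b.1 := by
          have := congrArg Fin.val h; simpa using this
        exact Fin.ext (by omega)
      · intro a b
        refine hadj _ _ (fun h => ?_)
        have := congrArg Fin.val h
        simp at this
        omega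
      · refine le_trans hcom ?_
        have hsub : (Finset.univ.filter fun w => ∀ a : Fin (2*k), G.Adj (x a) w) ⊆
            RelPc G k (fun a : Fin k => x ⟨a.1, by omega⟩) (fun a : Fin k => x ⟨k + a.1, by omega⟩) := by
          intro w hw
          have hw' := (Finset.mem_filter.mp hw).2
          exact Finset.mem_filter.mpr ⟨Finset.mem_univ _, fun a => hw' _, fun a => hw' _⟩
        exact_mod_cast Finset.card_le_card hsub
    · intro x hx x' hx' he
      funext i
      by_cases hik : i.1 < k
      · have := congrFun (congrArg Prod.fst he) ⟨i.1, hik⟩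
        simp only [] at this
        have h1 : (⟨i.1, by omega⟩ : Fin (2*k)) = i := Fin.ext rfl
        rwa [h1] at this
      · have hik' : i.1 - k < k := by omega
        have := congrFun (congrArg Prod.snd he) ⟨i.1 - k, hik'⟩
        simp only [] at this
        have h1 : (⟨k + (i.1 - k), by omega⟩ : Fin (2*k)) = i := Fin.ext (by simp; omega)
        rwa [h1] at this
  exact_mod_cast h

lemma prune_exists {T : Type*} [DecidableEq T] (R : T → T → Prop)
    (hsym : ∀ a b, R a b → R b a) (D : ℕ) :
    ∀ S : Finset T, 2 * D * S.card < ((S ×ˢ S).filter fun p => R p.1 p.2).card →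
      ∃ S', S' ⊆ S ∧ S'.Nonempty ∧ ∀ Q ∈ S', D < (S'.filter fun Q' => R Q Q').card := by
  intro S
  induction S using Finset.strongInduction with
  | _ S ih =>
    intro hS
    by_cases hall : ∀ Q ∈ S, D < (S.filter fun Q' => R Q Q').card
    · refine ⟨S, Finset.Subset.refl S, ?_, hall⟩
      rcases Finset.eq_empty_or_nonempty S with rfl | h
      · simp at hS
      · exact h
    · push_neg at hall
      obtain ⟨Q₀, hQ₀, hdeg⟩ := hall
      set S₂ := S.erase Q₀ with hS₂
      have hss : S₂ ⊂ S := Finset.erase_ssubset hQ₀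
      have hrow : ((S ×ˢ S).filter fun p => R p.1 p.2) ⊆
          ((S₂ ×ˢ S₂).filter fun p => R p.1 p.2) ∪
            ({Q₀} ×ˢ (S.filter fun q => R Q₀ q)) ∪
            ((S.filter fun q => R Q₀ q) ×ˢ {Q₀}) := by
        intro p hp
        obtain ⟨hpm, hpR⟩ := Finset.mem_filter.mp hp
        obtain ⟨hp1, hp2⟩ := Finset.mem_product.mp hpm
        by_cases h1 : p.1 = Q₀
        · refine Finset.mem_union_left _ (Finset.mem_union_right _ ?_)
          refine Finset.mem_product.mpr ⟨by simp [h1], ?_⟩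
          exact Finset.mem_filter.mpr ⟨hp2, h1 ▸ hpR⟩
        · by_cases h2 : p.2 = Q₀
          · refine Finset.mem_union_right _ ?_
            refine Finset.mem_product.mpr ⟨?_, by simp [h2]⟩
            exact Finset.mem_filter.mpr ⟨hp1, hsym _ _ (h2 ▸ hpR)⟩
          · refine Finset.mem_union_left _ (Finset.mem_union_left _ ?_)
            refine Finset.mem_filter.mpr ⟨?_, hpR⟩
            exact Finset.mem_product.mpr ⟨Finset.mem_erase.mpr ⟨h1, hp1⟩, Finset.mem_erase.mpr ⟨h2, hp2⟩⟩
      have hcard : ((S ×ˢ S).filter fun p => R p.1 p.2).card ≤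
          ((S₂ ×ˢ S₂).filter fun p => R p.1 p.2).card + 2 * D := by
        have h1 := Finset.card_le_card hrow
        have h2 := Finset.card_union_le
          (((S₂ ×ˢ S₂).filter fun p => R p.1 p.2) ∪ ({Q₀} ×ˢ (S.filter fun q => R Q₀ q)))
          ((S.filter fun q => R Q₀ q) ×ˢ {Q₀})
        have h3 := Finset.card_union_le ((S₂ ×ˢ S₂).filter fun p => R p.1 p.2)
          ({Q₀} ×ˢ (S.filter fun q => R Q₀ q))
        have h4 : ({Q₀} ×ˢ (S.filter fun q => R Q₀ q)).card ≤ D := by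
          rw [Finset.card_product, Finset.card_singleton, one_mul]
          omega
        have h5 : ((S.filter fun q => R Q₀ q) ×ˢ ({Q₀} : Finset T)).card ≤ D := by
          rw [Finset.card_product, Finset.card_singleton, mul_one]
          omega
        omega
      have hScard : 1 ≤ S.card := Finset.card_pos.mpr ⟨Q₀, hQ₀⟩
      have hS₂card : S₂.card = S.card - 1 := Finset.card_erase_of_mem hQ₀
      have hhyp : 2 * D * S₂.card < ((S₂ ×ˢ S₂).filter fun p => R p.1 p.2).card := by
        have := hS
        rw [hS₂card]
        have hexp : 2 * D * (S.card - 1) + 2*D = 2*D*S.card := by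
          cases' Nat.exists_eq_add_of_le hScard with c hc
          rw [hc, Nat.add_sub_cancel_left]
          ring
        omega
      obtain ⟨S', hsub, hne, hmin⟩ := ih S₂ hss hhyp
      exact ⟨S', hsub.trans (Finset.erase_subset _ _), hne, hmin⟩

lemma fiber_card (k : ℕ) (a : Fin k) (u : V) :
    ((Finset.univ : Finset (Fin k → V)).filter fun Q => Q a = u).card ≤ (Fintype.card V) ^ (k - 1) := by
  classical
  have h : ((Finset.univ : Finset (Fin k → V)).filter fun Q => Q a = u).card ≤
      (Finset.univ : Finset ({j : Fin k // j ≠ a} → V)).card := by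
    apply Finset.card_le_card_of_injOn (fun Q => fun b : {j : Fin k // j ≠ a} => Q b.1)
    · intro Q _; exact Finset.mem_univ _
    · intro Q hQ Q' hQ' he
      simp only [Finset.coe_filter, Set.mem_setOf_eq, Finset.mem_univ, true_and] at hQ hQ'
      funext j
      by_cases hj : j = a
      · rw [hj, hQ, hQ']
      · exact congrFun he ⟨j, hj⟩
  have hcc : Fintype.card {j : Fin k // j ≠ a} = k - 1 := by
    have h2 := Fintype.card_subtype_compl (p := fun j : Fin k => j = a)
    simp only [Fintype.card_subtype_eq, Fintype.card_fin] at h2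
    exact h2
  have h3 : ((Finset.univ : Finset ({j : Fin k // j ≠ a} → V))).card = Fintype.card V ^ (k - 1) := by
    rw [Finset.card_univ, Fintype.card_fun, hcc]
  rwa [h3] at h


set_option maxHeartbeats 1000000



lemma build (G : SimpleGraph V) (d : ℝ) (k : ℕ) (hk : 1 ≤ k)
    (S' : Finset (Fin k → V)) (D M : ℕ) (hS'ne : S'.Nonempty)
    (hmin : ∀ Q ∈ S', D < (S'.filter fun Q' => XRel G d k Q Q').card)
    (hD : k * (M * k) * (Fintype.card V) ^ (k - 1) ≤ D) :
    ∀ m, 1 ≤ m → m ≤ M → ∃ B : Fin m → (Fin k → V),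
      (∀ i, B i ∈ S') ∧
      (∀ (t : ℕ) (ht : t + 1 < m), XRel G d k (B ⟨t, by omega⟩) (B ⟨t + 1, ht⟩)) ∧
      Function.Injective (fun p : Fin m × Fin k => B p.1 p.2) := by
  intro m hm1
  induction m, hm1 using Nat.le_induction with
  | base =>
    intro _
    obtain ⟨Q₀, hQ₀⟩ := hS'ne
    have hd := hmin Q₀ hQ₀
    have hpos : 0 < (S'.filter fun Q' => XRel G d k Q₀ Q').card := by omega
    obtain ⟨Q', hQ'⟩ := Finset.card_pos.mp hpos
    have hrel : XRel G d k Q₀ Q' := (Finset.mem_filter.mp hQ').2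
    have hQinj : ∀ a b, Q₀ a = Q₀ b → a = b := by
      intro a b h
      by_contra hne
      exact (hrel.1 a b hne).ne h
    refine ⟨fun _ => Q₀, fun _ => hQ₀, fun t ht => by omega, ?_⟩
    intro p q h
    have h2 : p.2 = q.2 := hQinj _ _ h
    have h1 : p.1 = q.1 := Subsingleton.elim _ _
    exact Prod.ext h1 h2
  | succ m hm ih =>
    intro hmM
    obtain ⟨B, hmem, hchain, hinj⟩ := ih (by omega)
    set last := B ⟨m - 1, by omega⟩ with hlastdef
    set u : Fin k × (Fin m × Fin k) → Finset (Fin k → V) :=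
      fun q => Finset.univ.filter fun Q' : Fin k → V => Q' q.1 = B q.2.1 q.2.2 with hudef
    set blocked : Finset (Fin k → V) :=
      Finset.univ.filter (fun Q' => ∃ a : Fin k, ∃ p : Fin m × Fin k, Q' a = B p.1 p.2) with hblkdef
    have hblocked : blocked.card ≤ D := by
      have hsub : blocked ⊆ (Finset.univ : Finset (Fin k × (Fin m × Fin k))).biUnion u := by
        intro Q' hQ'
        obtain ⟨a, p, hap⟩ := (Finset.mem_filter.mp hQ').2
        exact Finset.mem_biUnion.mpr ⟨(a, p), Finset.mem_univ _,
          Finset.mem_filter.mpr ⟨Finset.mem_univ _, hap⟩⟩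
      have h1 := Finset.card_le_card hsub
      have h2 : ((Finset.univ : Finset (Fin k × (Fin m × Fin k))).biUnion u).card ≤
          ∑ q : Fin k × (Fin m × Fin k), (u q).card := Finset.card_biUnion_le
      have h3 : ∑ q : Fin k × (Fin m × Fin k), (u q).card
            ≤ (k * (m * k)) * (Fintype.card V) ^ (k - 1) := by
        have := Finset.sum_le_card_nsmul (Finset.univ : Finset (Fin k × (Fin m × Fin k)))
          (fun q => (u q).card)
          ((Fintype.card V) ^ (k - 1))
          (fun q _ => fiber_card k q.1 (B q.2.1 q.2.2))
        rw [smul_eq_mul] at this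
        have hcard : (Finset.univ : Finset (Fin k × (Fin m × Fin k))).card = k * (m * k) := by
          simp [Finset.card_univ]
        rw [hcard] at this
        exact this
      have h4 : k * (m * k) * (Fintype.card V) ^ (k - 1) ≤ k * (M * k) * (Fintype.card V) ^ (k - 1) := by
        have : k * (m * k) ≤ k * (M * k) := by
          have : m * k ≤ M * k := Nat.mul_le_mul_right k (by omega)
          exact Nat.mul_le_mul_left k this
        exact Nat.mul_le_mul_right _ this
      omega
    have hlastmem : last ∈ S' := hmem _
    have hdegS := hmin last hlastmem
    have hcand : ((S'.filter fun Q' => XRel G d k last Q') \ blocked).Nonempty := by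
      rw [← Finset.card_pos]
      have := Finset.card_le_card_sdiff_add_card (s := S'.filter fun Q' => XRel G d k last Q') (t := blocked)
      omega
    obtain ⟨Qs, hQs⟩ := hcand
    obtain ⟨hQsf, hQsnb⟩ := Finset.mem_sdiff.mp hQs
    have hQsS' : Qs ∈ S' := (Finset.mem_filter.mp hQsf).1
    have hrel : XRel G d k last Qs := (Finset.mem_filter.mp hQsf).2
    have hQsinj : ∀ a b, Qs a = Qs b → a = b := by
      intro a b h
      by_contra hne
      exact (hrel.2.1 a b hne).ne h
    set B' : Fin (m + 1) → (Fin k → V) := Fin.snoc B Qs with hB'def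
    have heval : ∀ (t : ℕ) (ht : t < m), B' ⟨t, by omega⟩ = B ⟨t, ht⟩ := by
      intro t ht
      have h : (⟨t, by omega⟩ : Fin (m + 1)) = Fin.castSucc ⟨t, ht⟩ := rfl
      rw [h, hB'def, Fin.snoc_castSucc]
    have hlast' : B' ⟨m, by omega⟩ = Qs := by
      have h : (⟨m, by omega⟩ : Fin (m + 1)) = Fin.last m := rfl
      rw [h, hB'def, Fin.snoc_last]
    refine ⟨B', ?_, ?_, ?_⟩
    · rintro ⟨t, ht⟩
      by_cases h : t < m
      · rw [heval t h]; exact hmem _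
      · have he : (⟨t, ht⟩ : Fin (m + 1)) = ⟨m, by omega⟩ := Fin.ext (by simp only [Fin.val_mk]; omega)
        rw [he, hlast']
        exact hQsS'
    · intro t ht
      by_cases h : t + 1 < m
      · rw [heval t (by omega), heval (t + 1) h]
        exact hchain t h
      · have htm : t = m - 1 := by omega
        have he : (⟨t + 1, ht⟩ : Fin (m + 1)) = ⟨m, by omega⟩ := Fin.ext (by simp only [Fin.val_mk]; omega)
        rw [heval t (by omega), he, hlast']
        have he2 : (⟨t, by omega⟩ : Fin m) = ⟨m - 1, by omega⟩ := Fin.ext (by simp only [Fin.val_mk]; omega)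
        rw [he2]
        exact hrel
    · rintro ⟨⟨i, hi⟩, a⟩ ⟨⟨t2, ht2⟩, b⟩ h
      simp only [] at h
      by_cases hi' : i < m <;> by_cases ht2' : t2 < m
      · have h' : B ⟨i, hi'⟩ a = B ⟨t2, ht2'⟩ b := by
          rw [← heval i hi', ← heval t2 ht2']; exact h
        have := hinj (a₁ := (⟨i, hi'⟩, a)) (a₂ := (⟨t2, ht2'⟩, b)) h'
        have h1 : i = t2 := congrArg (fun p => (p.1 : Fin m).1) this
        have h2 : a = b := congrArg Prod.snd this
        exact Prod.ext (Fin.ext h1) h2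
      · exfalso
        have he : (⟨t2, ht2⟩ : Fin (m + 1)) = ⟨m, by omega⟩ := Fin.ext (by simp only [Fin.val_mk]; omega)
        rw [heval i hi', he, hlast'] at h
        exact hQsnb (Finset.mem_filter.mpr ⟨Finset.mem_univ _, ⟨b, (⟨i, hi'⟩, a), h.symm⟩⟩)
      · exfalso
        have he : (⟨i, hi⟩ : Fin (m + 1)) = ⟨m, by omega⟩ := Fin.ext (by simp only [Fin.val_mk]; omega)
        rw [he, hlast', heval t2 ht2'] at h
        exact hQsnb (Finset.mem_filter.mpr ⟨Finset.mem_univ _, ⟨a, (⟨t2, ht2'⟩, b), h⟩⟩)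
      · have he1 : (⟨i, hi⟩ : Fin (m + 1)) = ⟨m, by omega⟩ := Fin.ext (by simp only [Fin.val_mk]; omega)
        have he2 : (⟨t2, ht2⟩ : Fin (m + 1)) = ⟨m, by omega⟩ := Fin.ext (by simp only [Fin.val_mk]; omega)
        rw [he1, hlast'] at h
        rw [he2, hlast'] at h
        exact Prod.ext (by rw [he1, he2]) (hQsinj _ _ h)


/-- Path Lemma: in a (ρ,d)-dense graph there is a k-path on at least ζn
vertices all of whose k consecutive vertices form ζ-connectable cliques. -/
theorem stmt1 (d : ℝ) (hd0 : 0 < d) (hd1 : d ≤ 1) (k : ℕ) (hk : 1 ≤ k) :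
    ∃ ρ ζ : ℝ, 0 < ρ ∧ 0 < ζ ∧ ∃ n₀ : ℕ, ∀ n ≥ n₀, ∀ G : SimpleGraph (Fin n),
      RhoDense G ρ d →
      ∃ (ℓ : ℕ) (v : Fin ℓ → Fin n), (ℓ : ℝ) ≥ ζ * (n : ℝ) ∧ IsPowPath G k v ∧
        ∀ (i : ℕ) (h : i + k ≤ ℓ),
          Connectable G ζ (fun j : Fin k => v ⟨i + (j : ℕ), by have := j.2; omega⟩) := by
  classical
  have hk0 : 0 < k := hk
  set γ : ℝ := (d / 2) ^ (2 * k) with hγdef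
  set c₁ : ℝ := (d / 4) * γ with hc₁def
  set α' : ℝ := c₁ ^ (2 * k) with hα'def
  have hγ0 : 0 < γ := by positivity
  have hc₁0 : 0 < c₁ := by positivity
  have hα'0 : 0 < α' := by positivity
  refine ⟨d * γ ^ 2 / 8, α' / (8 * k), by positivity, by positivity,
    ⌈(8 * (k:ℝ) ^ 2) / α'⌉₊ + 1, ?_⟩
  intro n hn G hdense
  have hcard : Fintype.card (Fin n) = n := Fintype.card_fin n
  have hn1 : 1 ≤ n := le_trans (by omega) hn
  have hnα : 8 * (k:ℝ) ^ 2 < α' * n := by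
    have h1 : (8 * (k:ℝ) ^ 2) / α' ≤ ((⌈(8 * (k:ℝ) ^ 2) / α'⌉₊ : ℕ) : ℝ) := Nat.le_ceil _
    have h2 : ((⌈(8 * (k:ℝ) ^ 2) / α'⌉₊ : ℕ) : ℝ) + 1 ≤ (n:ℝ) := by
      have h3 : (⌈(8 * (k:ℝ) ^ 2) / α'⌉₊ + 1 : ℕ) ≤ n := hn
      exact_mod_cast h3
    have h3 : (8 * (k:ℝ) ^ 2) / α' < n := by linarith
    calc 8 * (k:ℝ)^2 = (8 * (k:ℝ)^2/α') * α' := by field_simp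
      _ < (n:ℝ) * α' := mul_lt_mul_of_pos_right h3 hα'0
      _ = α' * n := by ring
  set M : ℕ := ⌈α' * n / (8 * (k:ℝ) ^ 2)⌉₊ with hMdef
  have hk2 : (0:ℝ) < 8 * (k:ℝ)^2 := by positivity
  have hM2 : 2 ≤ M := by
    have h1 : (1:ℝ) < α' * n / (8 * (k:ℝ)^2) := (one_lt_div hk2).mpr hnα
    have h2 : 1 < M := Nat.lt_ceil.mpr (by exact_mod_cast h1)
    omega
  have hMub : (M:ℝ) < α' * n / (8 * (k:ℝ)^2) + 1 := Nat.ceil_lt_add_one (by positivity)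
  have hMlb : α' * n / (8 * (k:ℝ)^2) ≤ (M:ℝ) := Nat.le_ceil _
  set D : ℕ := k * (M * k) * n ^ (k - 1) with hDdef
  have hN1 : 1 ≤ Fintype.card (Fin n) := by rw [hcard]; exact hn1
  have hρle : d * γ ^ 2 / 8 ≤ d * ((d/2) ^ (2*k)) ^ 2 / 8 := le_of_eq (by rw [hγdef])
  have htup := tupSet_card G hd0 hd1 hρle hdense hN1 (2 * k) le_rfl
  have hpairs := pairs_lower G d k hk
  set P := ((Finset.univ ×ˢ Finset.univ : Finset ((Fin k → Fin n) × (Fin k → Fin n))).filter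
        fun p => XRel G d k p.1 p.2) with hPdef
  have hP : α' * (n:ℝ) ^ (2 * k) ≤ (P.card : ℝ) := by
    have h1 : ((d/4) * (d/2)^(2*k) * ((Fintype.card (Fin n)):ℝ)) ^ (2*k) = α' * (n:ℝ)^(2*k) := by
      rw [hcard, hα'def, hc₁def, hγdef, mul_pow]
    calc α' * (n:ℝ)^(2*k) = ((d/4) * (d/2)^(2*k) * ((Fintype.card (Fin n)):ℝ)) ^ (2*k) := h1.symm
      _ ≤ ((tupSet G d (2*k)).card : ℝ) := htup
      _ ≤ (P.card : ℝ) := hpairs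
  have hn0 : (0:ℝ) < (n:ℝ) := by exact_mod_cast hn1
  have hX : (0:ℝ) < (n:ℝ) ^ (2*k - 1) := by positivity
  have hpp : (n:ℝ)^(k-1) * (n:ℝ)^k = (n:ℝ)^(2*k-1) := by
    rw [← pow_add]; congr 1; omega
  have hDr : ((D:ℕ):ℝ) * (n:ℝ)^k = (k:ℝ)^2 * (M:ℝ) * (n:ℝ)^(2*k-1) := by
    rw [hDdef]; push_cast; rw [← hpp]; ring
  have h8 : 8 * (k:ℝ)^2 * (M:ℝ) < α' * n + 8 * (k:ℝ)^2 := by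
    have h := mul_lt_mul_of_pos_left hMub hk2
    have he : 8 * (k:ℝ)^2 * (α' * n / (8 * (k:ℝ)^2) + 1) = α' * n + 8 * (k:ℝ)^2 := by
      field_simp
    rw [he] at h
    exact h
  have hkey : 2 * (D:ℝ) * (n:ℝ)^k < α' * (n:ℝ)^(2*k) := by
    have hq : (n:ℝ) * (n:ℝ)^(2*k-1) = (n:ℝ)^(2*k) := by
      rw [← pow_succ']
      congr 1
      omega
    have hrw2 : α' * (n:ℝ)^(2*k) = (α' * n) * (n:ℝ)^(2*k-1) := by rw [← hq]; ring
    have f1 := mul_lt_mul_of_pos_right h8 hX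
    have f2 := mul_lt_mul_of_pos_right hnα hX
    rw [hrw2]
    nlinarith [hDr, f1, f2, hX]
  have hDP : 2 * D * (Finset.univ : Finset (Fin k → Fin n)).card < P.card := by
    have hu : (Finset.univ : Finset (Fin k → Fin n)).card = n ^ k := by
      rw [Finset.card_univ, Fintype.card_fun, hcard, Fintype.card_fin]
    rw [hu]
    have hcast : ((2 * D * n ^ k : ℕ) : ℝ) < (P.card : ℝ) := by
      push_cast
      calc 2 * (D:ℝ) * (n:ℝ)^k < α' * (n:ℝ)^(2*k) := hkey
        _ ≤ (P.card : ℝ) := hP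
    exact_mod_cast hcast
  obtain ⟨S', hS'sub, hS'ne, hmin⟩ :=
    prune_exists (XRel G d k) (fun a b h => XRel_symm G d k h) D Finset.univ hDP
  have hDeq : k * (M * k) * (Fintype.card (Fin n)) ^ (k - 1) ≤ D := by rw [hcard]
  obtain ⟨B, hmem, hchain, hBinj⟩ := build G d k hk S' D M hS'ne hmin hDeq M (by omega) le_rfl
  have hblock : ∀ (q : ℕ) (hq : q < M), ∀ a b, a ≠ b → G.Adj (B ⟨q, hq⟩ a) (B ⟨q, hq⟩ b) := by
    intro q hq a b hab
    by_cases h : q + 1 < M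
    · exact (hchain q h).1 a b hab
    · have hq1 : 1 ≤ q := by omega
      have h2 := hchain (q - 1) (by omega)
      have he : (⟨q - 1 + 1, by omega⟩ : Fin M) = ⟨q, hq⟩ := Fin.ext (by simp only [Fin.val_mk]; omega)
      rw [he] at h2
      exact h2.2.1 a b hab
  have hdiv : ∀ i : Fin (k * M), (i:ℕ) / k < M := fun i => Nat.div_lt_of_lt_mul i.2
  have hmod : ∀ i : Fin (k * M), (i:ℕ) % k < k := fun _ => Nat.mod_lt _ hk0
  refine ⟨k * M, fun i => B ⟨(i:ℕ)/k, hdiv i⟩ ⟨(i:ℕ)%k, hmod i⟩, ?_, ⟨?_, ?_⟩, ?_⟩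
  · have h1 : (k:ℝ) * (α' * n / (8 * (k:ℝ)^2)) ≤ (k:ℝ) * (M:ℝ) :=
      mul_le_mul_of_nonneg_left hMlb (by positivity)
    have h2 : (k:ℝ) * (α' * n / (8 * (k:ℝ)^2)) = α' / (8 * k) * n := by
      field_simp
    rw [ge_iff_le]
    push_cast
    linarith
  · intro i j h
    simp only [] at h
    have hpair := hBinj (a₁ := (⟨(i:ℕ)/k, hdiv i⟩, ⟨(i:ℕ)%k, hmod i⟩))
      (a₂ := (⟨(j:ℕ)/k, hdiv j⟩, ⟨(j:ℕ)%k, hmod j⟩)) h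
    have hq : (i:ℕ)/k = (j:ℕ)/k := congrArg (fun p => (p.1 : Fin M).1) hpair
    have hr : (i:ℕ)%k = (j:ℕ)%k := congrArg (fun p => (p.2 : Fin k).1) hpair
    apply Fin.ext
    rw [← Nat.div_add_mod (i:ℕ) k, ← Nat.div_add_mod (j:ℕ) k, hq, hr]
  · intro i j hij hjk
    simp only []
    have hq1 : (i:ℕ)/k ≤ (j:ℕ)/k := Nat.div_le_div_right (le_of_lt hij)
    have hq2 : (j:ℕ)/k ≤ (i:ℕ)/k + 1 := by
      have h1 : (j:ℕ)/k ≤ ((i:ℕ) + k)/k := Nat.div_le_div_right hjk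
      rwa [Nat.add_div_right _ hk0] at h1
    by_cases hsame : (i:ℕ)/k = (j:ℕ)/k
    · have hmodne : (i:ℕ)%k ≠ (j:ℕ)%k := by
        intro hmm
        have hij' : (i:ℕ) = (j:ℕ) := by
          rw [← Nat.div_add_mod (i:ℕ) k, ← Nat.div_add_mod (j:ℕ) k, hsame, hmm]
        omega
      have he : (⟨(j:ℕ)/k, hdiv j⟩ : Fin M) = ⟨(i:ℕ)/k, hdiv i⟩ :=
        Fin.ext (by simp only [Fin.val_mk]; omega)
      rw [he]
      exact hblock _ (hdiv i) _ _ (fun hcon => hmodne (congrArg Fin.val hcon))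
    · have hlt : (i:ℕ)/k + 1 < M := by
        have := hdiv j; omega
      have hcross := (hchain ((i:ℕ)/k) hlt).2.2.1
      have he : (⟨(j:ℕ)/k, hdiv j⟩ : Fin M) = ⟨(i:ℕ)/k + 1, hlt⟩ :=
        Fin.ext (by simp only [Fin.val_mk]; omega)
      rw [he]
      exact hcross _ _
  · intro i hik
    obtain ⟨p, hp, hwin⟩ : ∃ p, p + 1 < M ∧
        ∀ t : Fin k, (i + (t:ℕ))/k = p ∨ (i + (t:ℕ))/k = p + 1 := by
      by_cases hc : i / k + 1 < M
      · refine ⟨i / k, hc, fun t => ?_⟩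
        have hlo : i / k ≤ (i + (t:ℕ))/k := Nat.div_le_div_right (by omega)
        have hhi : (i + (t:ℕ))/k ≤ i/k + 1 := by
          have h1 : (i + (t:ℕ))/k ≤ (i + k)/k := Nat.div_le_div_right (by have := t.2; omega)
          rwa [Nat.add_div_right _ hk0] at h1
        omega
      · have hiM : i / k < M := Nat.div_lt_of_lt_mul (by omega)
        refine ⟨M - 2, by omega, fun t => ?_⟩
        have hlo : i / k ≤ (i + (t:ℕ))/k := Nat.div_le_div_right (by omega)
        have hup : (i + (t:ℕ))/k < M := Nat.div_lt_of_lt_mul (by have := t.2; omega)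
        omega
    have hwd : ∀ t : Fin k, (i + (t:ℕ))/k < M := fun t => Nat.div_lt_of_lt_mul (by have := t.2; omega)
    have hRel := hchain p hp
    have hpcle := hRel.2.2.2
    show (extCount G _ : ℝ) ≥ α' / (8*k) * ((Fintype.card (Fin n)) : ℝ)
    rw [ge_iff_le]
    have hδ : α' / (8 * k) * ((Fintype.card (Fin n)):ℝ) ≤ (d/2)^(2*k) * ((Fintype.card (Fin n)):ℝ) := by
      apply mul_le_mul_of_nonneg_right _ (by positivity)
      have hγ1 : γ ≤ 1 := by
        rw [hγdef]
        exact pow_le_one₀ (by linarith) (by linarith)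
      have hc₁1 : c₁ ≤ 1 := by
        rw [hc₁def]
        nlinarith
      calc α' / (8*k) ≤ α' := by
            apply div_le_self (le_of_lt hα'0)
            have : (1:ℝ) ≤ (k:ℝ) := by exact_mod_cast hk
            linarith
        _ ≤ c₁ := by
            rw [hα'def]
            exact pow_le_of_le_one (le_of_lt hc₁0) hc₁1 (by omega)
        _ ≤ γ := by
            rw [hc₁def]
            nlinarith
    refine le_trans hδ (le_trans hpcle ?_)
    have hsub : RelPc G k (B ⟨p, by omega⟩) (B ⟨p+1, hp⟩) ⊆
        Finset.univ.filter (fun w => ∀ t : Fin k,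
          G.Adj (B ⟨(i + (t:ℕ))/k, hwd t⟩ ⟨(i + (t:ℕ))%k, Nat.mod_lt _ hk0⟩) w) := by
      intro w hw
      simp only [RelPc, Finset.mem_filter, Finset.mem_univ, true_and] at hw
      obtain ⟨hw1, hw2⟩ := hw
      refine Finset.mem_filter.mpr ⟨Finset.mem_univ _, fun t => ?_⟩
      rcases hwin t with hcase | hcase
      · have he : (⟨(i + (t:ℕ))/k, hwd t⟩ : Fin M) = ⟨p, by omega⟩ :=
          Fin.ext (by simp only [Fin.val_mk]; omega)
        rw [he]
        exact hw1 _
      · have he : (⟨(i + (t:ℕ))/k, hwd t⟩ : Fin M) = ⟨p+1, hp⟩ :=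
          Fin.ext (by simp only [Fin.val_mk]; omega)
        rw [he]
        exact hw2 _
    have hcc := Finset.card_le_card hsub
    have hgoal : ((RelPc G k (B ⟨p, by omega⟩) (B ⟨p+1, hp⟩)).card : ℝ) ≤
        (((Finset.univ.filter (fun w => ∀ t : Fin k,
          G.Adj (B ⟨(i + (t:ℕ))/k, hwd t⟩ ⟨(i + (t:ℕ))%k, Nat.mod_lt _ hk0⟩) w)).card : ℕ) : ℝ) := by
      exact_mod_cast hcc
    exact hgoal
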